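/- For every c > 0, if X₂ is a random variable with distribution F_c²(δ_∞), then P(X₂ ≥ i) ≤ 16c²/((i-1)(i-2)) for all integers i ≥ 4. -/

import Mathlib

open Filter Topology Set

noncomputable section

/-- Convolution of two (sub)probability mass functions on `ℕ∞ = ℕ⁺ ∪ {∞} ∪ {0}`,
with the convention `∞ + anything = ∞`. -/
def conv (μ ν : ℕ∞ → ℝ) : ℕ∞ → ℝ :=
  fun k => ∑' p : ℕ∞ × ℕ∞, if p.1 + p.2 = k then μ p.1 * ν p.2 else 0

/-- The factor `(l(l-1)/2) / (l(l-1)/2 + c)`, the probability that the coalescence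
from `l` to `l-1` lineages happens before an independent `Exp(c)` time. -/
def kingmanFactor (c : ℝ) (l : ℕ) : ℝ :=
  ((l : ℝ) * ((l : ℝ) - 1) / 2) / ((l : ℝ) * ((l : ℝ) - 1) / 2 + c)

/-- `pK c j i` : the probability that Kingman's coalescent started from `j` lineages
has exactly `i` lineages at an independent exponential time with rate `c`. -/
def pK (c : ℝ) (j : ℕ∞) (i : ℕ) : ℝ :=
  (c / ((i : ℝ) * ((i : ℝ) - 1) / 2 + c)) *
    (if j = ⊤ then ∏' l : ℕ, kingmanFactor c (i + 1 + l)
     else ∏ l ∈ Finset.Icc (i + 1) j.toNat, kingmanFactor c l)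

/-- The mass that `F_c μ` puts on a finite `k ∈ ℕ⁺`. -/
def FcFin (c : ℝ) (μ : ℕ∞ → ℝ) (k : ℕ) : ℝ :=
  ∑' j : ℕ∞, if (k : ℕ∞) ≤ j then conv μ μ j * pK c j k else 0

/-- The map `F_c` on distributions on `ℕ⁺ ∪ {∞}`; the mass at `∞` is the remaining mass. -/
def Fc (c : ℝ) (μ : ℕ∞ → ℝ) : ℕ∞ → ℝ :=
  fun k =>
    if k = ⊤ then 1 - ∑' n : ℕ, FcFin c μ n
    else if k = 0 then 0 else FcFin c μ k.toNat

/-- `μ` is a probability distribution on `ℕ⁺ ∪ {∞}` (no mass at `0`). -/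
def IsDist (μ : ℕ∞ → ℝ) : Prop :=
  (∀ k, 0 ≤ μ k) ∧ μ 0 = 0 ∧ HasSum μ 1

/-- The mean of a distribution on `ℕ⁺ ∪ {∞}` (ignoring the mass at `∞`). -/
def distMean (μ : ℕ∞ → ℝ) : ℝ := ∑' n : ℕ, (n : ℝ) * μ (n : ℕ∞)

/-- `μ` belongs to `S₁`: a probability distribution on `ℕ⁺` with finite mean. -/
def MemS1 (μ : ℕ∞ → ℝ) : Prop :=
  IsDist μ ∧ μ ⊤ = 0 ∧ Summable (fun n : ℕ => (n : ℝ) * μ (n : ℕ∞))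

/-- `StDom μ ν` : `μ ⪯ ν` in the usual stochastic order, i.e.
`μ([0,x]) ≥ ν([0,x])` for all `x ∈ [0,∞]`. -/
def StDom (μ ν : ℕ∞ → ℝ) : Prop :=
  ∀ x : ℕ∞, (∑' k : ℕ∞, if k ≤ x then ν k else 0) ≤ ∑' k : ℕ∞, if k ≤ x then μ k else 0

/-- The unit point mass at `a`. -/
def delta (a : ℕ∞) : ℕ∞ → ℝ := fun k => if k = a then 1 else 0

end

/-
`F_c(δ_∞)` is the law of the number of lineages of Kingman's coalescent, come down from
infinity, at an independent `Exp(c)` time: if `X` has this law, `P(X ≤ l)` is the product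
`∏_{k > l} λ_k / (λ_k + c)` with `λ_k = k(k-1)/2`, which is at least `1 - ∑_{k > l} c/λ_k = 1 - 2c/l`.
A sample of `F_c²(δ_∞)` is obtained by running the coalescent from `X + X'` lineages, `X, X'`
independent with law `F_c(δ_∞)`. To end with at least `i` lineages, first `X + X' ≥ i`, which
forces `X > ⌊(i-1)/2⌋` or `X' > ⌊(i-1)/2⌋` (probability `≤ 8c/(i-2)`), and then the coalescent
must not get down to `i - 1` lineages (probability `≤ 2c/(i-1)`).
-/

open Finset

lemma Real.multipliable_of_nonneg_of_le_one {ι : Type*} {f : ι → ℝ} (h0 : ∀ i, 0 ≤ f i)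
    (h1 : ∀ i, f i ≤ 1) : Multipliable f := by
  classical
  refine ⟨_, tendsto_atTop_ciInf (fun s t hst => ?_) ⟨0, ?_⟩⟩
  · change ∏ i ∈ t, f i ≤ ∏ i ∈ s, f i
    rw [← prod_sdiff hst]
    exact mul_le_of_le_one_left (prod_nonneg fun i _ => h0 i)
      (prod_le_one (fun i _ => h0 i) fun i _ => h1 i)
  · rintro _ ⟨s, rfl⟩
    exact prod_nonneg fun i _ => h0 i

lemma Finset.one_sub_sum_le_prod_one_sub {ι : Type*} (s : Finset ι) {x : ι → ℝ}
    (h0 : ∀ i ∈ s, 0 ≤ x i) (h1 : ∀ i ∈ s, x i ≤ 1) : 1 - ∑ i ∈ s, x i ≤ ∏ i ∈ s, (1 - x i) := by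
  classical
  induction s using Finset.induction_on with
  | empty => simp
  | insert a s ha ih =>
    rw [prod_insert ha, sum_insert ha]
    have hs := ih (fun i hi => h0 i (mem_insert_of_mem hi)) fun i hi => h1 i (mem_insert_of_mem hi)
    have hxa0 := h0 a (mem_insert_self a s)
    have hxa1 := h1 a (mem_insert_self a s)
    have hsum : 0 ≤ ∑ i ∈ s, x i := sum_nonneg fun i hi => h0 i (mem_insert_of_mem hi)
    nlinarith

lemma hasSum_ite_lt {α : Type*} [AddCommMonoid α] [TopologicalSpace α] (f : ℕ → α) (i : ℕ) :
    HasSum (fun n => if n < i then f n else 0) (∑ n ∈ range i, f n) := by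
  convert hasSum_sum_of_ne_finset_zero (L := .unconditional ℕ) (s := range i)
    (f := fun n => if n < i then f n else 0) fun n hn => if_neg (by simpa using hn) using 1
  exact sum_congr rfl fun n hn => (if_pos (Finset.mem_range.1 hn)).symm

lemma ENat.tsum_eq_tsum_coe_of_apply_top {α : Type*} [AddCommMonoid α] [TopologicalSpace α]
    {f : ℕ∞ → α} (h : f ⊤ = 0) : ∑' k, f k = ∑' n : ℕ, f n := by
  refine (Nat.cast_injective.tsum_eq fun k hk => ?_).symm
  lift k to ℕ using fun hk' => hk (hk' ▸ h)
  exact ⟨k, rfl⟩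

lemma ENat.hasSum_add_apply_top {α : Type*} [AddCommGroup α] [TopologicalSpace α]
    [IsTopologicalAddGroup α] {f : ℕ∞ → α} {a : α} (h : HasSum (fun n : ℕ => f n) a) :
    HasSum f (a + f ⊤) := by
  have hfin : HasSum (Function.update f ⊤ 0) a := by
    refine (Nat.cast_injective.hasSum_iff fun k hk => ?_).1 ?_
    · induction k using ENat.recTopCoe with
      | top => simp
      | coe n => exact absurd ⟨n, rfl⟩ hk
    · convert h using 2 with n
      simp
  simpa [add_comm] using hfin.update ⊤ (f ⊤)

lemma sq_sum_range_le_sum_range_sum_antidiagonal {f : ℕ → ℝ} (hf : ∀ n, 0 ≤ f n) {l m : ℕ}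
    (h : 2 * l ≤ m) :
    (∑ a ∈ range (l + 1), f a) ^ 2 ≤ ∑ j ∈ range (m + 1), ∑ p ∈ antidiagonal j, f p.1 * f p.2 := by
  rw [sq, sum_mul_sum, ← sum_product', ← sum_fiberwise_of_maps_to (g := fun p => p.1 + p.2)
    (t := range (m + 1)) fun p hp => by simp only [mem_product, Finset.mem_range] at hp ⊢; omega]
  refine sum_le_sum fun j _ => sum_le_sum_of_subset_of_nonneg (fun p hp => ?_)
    fun p _ _ => mul_nonneg (hf _) (hf _)
  exact mem_antidiagonal.2 (mem_filter.1 hp).2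

section

variable {c : ℝ} {μ : ℕ∞ → ℝ}

lemma kingmanFactor_nonneg (hc : 0 ≤ c) (l : ℕ) : 0 ≤ kingmanFactor c l := by
  rw [kingmanFactor, ← Nat.cast_choose_two]
  positivity

lemma kingmanFactor_le_one (hc : 0 ≤ c) (l : ℕ) : kingmanFactor c l ≤ 1 := by
  rw [kingmanFactor, ← Nat.cast_choose_two]
  exact div_le_one_of_le₀ (by linarith) (by positivity)

lemma kingmanFactor_zero : kingmanFactor c 0 = 0 := by
  simp [kingmanFactor]

lemma kingmanFactor_one : kingmanFactor c 1 = 0 := by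
  simp [kingmanFactor]

lemma one_sub_kingmanFactor (hc : 0 < c) (l : ℕ) :
    1 - kingmanFactor c l = c / ((l : ℝ) * ((l : ℝ) - 1) / 2 + c) := by
  rw [kingmanFactor, ← Nat.cast_choose_two]
  have : (0 : ℝ) < (l.choose 2 : ℕ) + c := by positivity
  field_simp
  ring

-- `1 - kingmanFactor c (l + 1) ≤ c / (l (l + 1) / 2)`, which telescopes.
lemma one_sub_kingmanFactor_succ_le (hc : 0 ≤ c) {l : ℕ} (hl : 1 ≤ l) :
    1 - kingmanFactor c (l + 1) ≤ 2 * c / l - 2 * c / (l + 1) := by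
  have hl' : (1 : ℝ) ≤ l := by exact_mod_cast hl
  have hpair : (0 : ℝ) < ((l + 1 : ℕ) : ℝ) * (((l + 1 : ℕ) : ℝ) - 1) / 2 := by
    push_cast; nlinarith
  rw [kingmanFactor, one_sub_div (by positivity), add_sub_cancel_left]
  calc c / (((l + 1 : ℕ) : ℝ) * (((l + 1 : ℕ) : ℝ) - 1) / 2 + c)
      ≤ c / (((l + 1 : ℕ) : ℝ) * (((l + 1 : ℕ) : ℝ) - 1) / 2) :=
        div_le_div_of_nonneg_left hc hpair (by linarith)
    _ = 2 * c / l - 2 * c / (l + 1) := by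
        have : (l : ℝ) ≠ 0 := by positivity
        push_cast
        rw [add_sub_cancel_right]
        field_simp
        ring

lemma sum_range_one_sub_kingmanFactor_le (hc : 0 ≤ c) {m : ℕ} (hm : 1 ≤ m) (N : ℕ) :
    ∑ l ∈ range N, (1 - kingmanFactor c (m + 1 + l)) ≤ 2 * c / m := by
  calc ∑ l ∈ range N, (1 - kingmanFactor c (m + 1 + l))
      ≤ ∑ l ∈ range N, (2 * c / ((m + l : ℕ) : ℝ) - 2 * c / ((m + (l + 1) : ℕ) : ℝ)) :=
        sum_le_sum fun l _ => by
          simpa [add_right_comm, add_assoc] using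
            one_sub_kingmanFactor_succ_le hc (l := m + l) (by omega)
    _ = 2 * c / m - 2 * c / ((m + N : ℕ) : ℝ) := by
        simpa using sum_range_sub' (fun l => 2 * c / ((m + l : ℕ) : ℝ)) N
    _ ≤ 2 * c / m := sub_le_self _ (by positivity)

lemma multipliable_kingmanFactor (hc : 0 ≤ c) (g : ℕ → ℕ) :
    Multipliable fun l => kingmanFactor c (g l) :=
  Real.multipliable_of_nonneg_of_le_one (fun _ => kingmanFactor_nonneg hc _)
    fun _ => kingmanFactor_le_one hc _

/-- The probability that Kingman's coalescent started from `j` lineages has at most `m`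
lineages at an independent `Exp(c)` time. -/
noncomputable def kingmanCDF (c : ℝ) (j : ℕ∞) (m : ℕ) : ℝ :=
  if j = ⊤ then ∏' l : ℕ, kingmanFactor c (m + 1 + l)
  else ∏ l ∈ Finset.Icc (m + 1) j.toNat, kingmanFactor c l

lemma kingmanCDF_coe (n m : ℕ) :
    kingmanCDF c n m = ∏ l ∈ range (n - m), kingmanFactor c (m + 1 + l) := by
  rw [kingmanCDF, if_neg (ENat.natCast_ne_top n), ENat.toNat_natCast,
    ← Finset.Ico_add_one_right_eq_Icc, prod_Ico_eq_prod_range, Nat.add_sub_add_right]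

lemma kingmanCDF_of_le {n m : ℕ} (h : n ≤ m) : kingmanCDF c n m = 1 := by
  rw [kingmanCDF_coe, Nat.sub_eq_zero_of_le h, prod_range_zero]

lemma tendsto_prod_range_kingmanCDF_top (hc : 0 ≤ c) (m : ℕ) :
    Tendsto (fun N => ∏ l ∈ range N, kingmanFactor c (m + 1 + l)) atTop
      (𝓝 (kingmanCDF c ⊤ m)) :=
  (multipliable_kingmanFactor hc _).hasProd.tendsto_prod_nat

lemma kingmanCDF_mem_of_isClosed {S : Set ℝ} (hS : IsClosed S) (hc : 0 ≤ c) {m : ℕ}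
    (h : ∀ N, ∏ l ∈ range N, kingmanFactor c (m + 1 + l) ∈ S) (j : ℕ∞) :
    kingmanCDF c j m ∈ S := by
  induction j using ENat.recTopCoe with
  | top => exact hS.mem_of_tendsto (tendsto_prod_range_kingmanCDF_top hc m) (.of_forall h)
  | coe n => exact kingmanCDF_coe (c := c) n m ▸ h _

lemma kingmanCDF_nonneg (hc : 0 ≤ c) (j : ℕ∞) (m : ℕ) : 0 ≤ kingmanCDF c j m :=
  kingmanCDF_mem_of_isClosed isClosed_Ici hc
    (fun _ => prod_nonneg fun _ _ => kingmanFactor_nonneg hc _) j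

lemma kingmanCDF_le_one (hc : 0 ≤ c) (j : ℕ∞) (m : ℕ) : kingmanCDF c j m ≤ 1 :=
  kingmanCDF_mem_of_isClosed isClosed_Iic hc
    (fun _ => prod_le_one (fun _ _ => kingmanFactor_nonneg hc _)
      fun _ _ => kingmanFactor_le_one hc _) j

lemma one_sub_le_kingmanCDF (hc : 0 ≤ c) {m : ℕ} (hm : 1 ≤ m) (j : ℕ∞) :
    1 - 2 * c / m ≤ kingmanCDF c j m := by
  refine kingmanCDF_mem_of_isClosed isClosed_Ici hc (fun N => ?_) j
  have h := (range N).one_sub_sum_le_prod_one_sub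
    (x := fun l => 1 - kingmanFactor c (m + 1 + l))
    (fun l _ => sub_nonneg.2 (kingmanFactor_le_one hc _))
    (fun l _ => sub_le_self _ (kingmanFactor_nonneg hc _))
  simp only [sub_sub_cancel] at h
  exact (sub_le_sub_left (sum_range_one_sub_kingmanFactor_le hc hm N) 1).trans h

lemma kingmanCDF_eq_mul_succ (hc : 0 ≤ c) {j : ℕ∞} {m : ℕ} (hm : ((m + 1 : ℕ) : ℕ∞) ≤ j) :
    kingmanCDF c j m = kingmanFactor c (m + 1) * kingmanCDF c j (m + 1) := by
  induction j using ENat.recTopCoe with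
  | top =>
    simp only [kingmanCDF, if_true]
    rw [tprod_eq_zero_mul' (f := fun l => kingmanFactor c (m + 1 + l))
      (multipliable_kingmanFactor hc _)]
    simp only [add_zero]
    congr 2 with l
    ring_nf
  | coe n =>
    have hn : n - m = n - (m + 1) + 1 := by
      have := ENat.natCast_le_natCast.1 hm
      omega
    rw [kingmanCDF_coe, kingmanCDF_coe, hn, prod_range_succ', mul_comm]
    congr 2 with l
    ring_nf

lemma pK_nonneg (hc : 0 ≤ c) (j : ℕ∞) (n : ℕ) : 0 ≤ pK c j n := by
  rw [pK, ← Nat.cast_choose_two]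
  exact mul_nonneg (by positivity) (kingmanCDF_nonneg hc j n)

lemma pK_le_one (hc : 0 ≤ c) (j : ℕ∞) (n : ℕ) : pK c j n ≤ 1 := by
  rw [pK, ← Nat.cast_choose_two]
  exact mul_le_one₀ (div_le_one_of_le₀ (by linarith [(n.choose 2).cast_nonneg (α := ℝ)])
    (by positivity)) (kingmanCDF_nonneg hc j n) (kingmanCDF_le_one hc j n)

lemma pK_eq_one_sub_mul_kingmanCDF (hc : 0 < c) (j : ℕ∞) (n : ℕ) :
    pK c j n = (1 - kingmanFactor c n) * kingmanCDF c j n := by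
  rw [one_sub_kingmanFactor hc]
  rfl

lemma sum_range_succ_pK (hc : 0 < c) {j : ℕ∞} {m : ℕ} (hm : (m : ℕ∞) ≤ j) :
    ∑ n ∈ range (m + 1), pK c j n = kingmanCDF c j m := by
  induction m with
  | zero => simp [pK_eq_one_sub_mul_kingmanCDF hc, kingmanFactor_zero]
  | succ m ih =>
    rw [sum_range_succ, ih (le_trans (by simp) hm), pK_eq_one_sub_mul_kingmanCDF hc,
      kingmanCDF_eq_mul_succ hc.le hm]
    ring

lemma sum_range_succ_ite_pK (hc : 0 < c) (j m : ℕ) :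
    ∑ n ∈ range (m + 1), (if n ≤ j then pK c j n else 0) = kingmanCDF c j m := by
  rcases le_total j m with h | h
  · have hfilter : (range (m + 1)).filter (· ≤ j) = range (j + 1) := by
      ext n; simp only [mem_filter, Finset.mem_range]; omega
    rw [← sum_filter, hfilter, sum_range_succ_pK hc le_rfl, kingmanCDF_of_le le_rfl,
      kingmanCDF_of_le h]
  · rw [sum_congr rfl fun n hn => if_pos (by simp only [Finset.mem_range] at hn; omega),
      sum_range_succ_pK hc (by exact_mod_cast h)]

lemma pK_top_zero (hc : 0 < c) : pK c ⊤ 0 = 0 := by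
  rw [pK_eq_one_sub_mul_kingmanCDF hc, kingmanCDF_eq_mul_succ hc.le le_top, kingmanFactor_one,
    zero_mul, mul_zero]

lemma hasSum_pK_top (hc : 0 < c) : HasSum (fun n : ℕ => pK c ⊤ n) 1 := by
  rw [hasSum_iff_tendsto_nat_of_nonneg (fun n => pK_nonneg hc.le ⊤ n), ← tendsto_add_atTop_iff_nat 1]
  simp_rw [sum_range_succ_pK hc le_top]
  have hlow : Tendsto (fun m : ℕ => 1 - 2 * c / m) atTop (𝓝 1) := by
    simpa using tendsto_const_nhds.sub (tendsto_const_div_atTop_nhds_zero_nat (2 * c))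
  refine tendsto_of_tendsto_of_tendsto_of_le_of_le' hlow tendsto_const_nhds ?_
    (.of_forall fun m => kingmanCDF_le_one hc.le ⊤ m)
  filter_upwards [eventually_ge_atTop 1] with m hm using one_sub_le_kingmanCDF hc.le hm ⊤

lemma conv_apply_coe (μ ν : ℕ∞ → ℝ) (j : ℕ) :
    conv μ ν j = ∑ p ∈ antidiagonal j, μ p.1 * ν p.2 := by
  let e : ℕ ↪ ℕ∞ := ⟨Nat.cast, Nat.cast_injective⟩
  rw [conv, tsum_eq_sum (s := (antidiagonal j).map (e.prodMap e)), sum_map]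
  · refine sum_congr rfl fun p hp => if_pos ?_
    simpa [e] using congrArg ((↑) : ℕ → ℕ∞) (mem_antidiagonal.1 hp)
  · rintro ⟨a, b⟩ hab
    refine if_neg fun h => hab ?_
    obtain ⟨a, b, rfl, rfl, hj⟩ := WithTop.add_eq_coe.1 h
    exact mem_map_of_mem _ (show (a, b) ∈ antidiagonal j from mem_antidiagonal.2 hj)

lemma conv_apply_top {μ ν : ℕ∞ → ℝ} (hμ : μ ⊤ = 0) (hν : ν ⊤ = 0) : conv μ ν ⊤ = 0 := by
  refine (tsum_congr fun p => ?_).trans tsum_zero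
  split_ifs with h
  · rcases ENat.add_eq_top.1 h with h | h <;> simp [h, hμ, hν]
  · rfl

lemma conv_delta_top : conv (delta ⊤) (delta ⊤) = delta ⊤ := by
  ext k
  rw [conv, tsum_eq_single (⊤, ⊤)]
  · simp [delta, eq_comm]
  · rintro ⟨a, b⟩ hab
    simp only [delta]
    split_ifs <;> simp_all

lemma Fc_apply_coe (μ : ℕ∞ → ℝ) {n : ℕ} (hn : n ≠ 0) : Fc c μ n = FcFin c μ n := by
  simp [Fc, hn]

lemma FcFin_eq_tsum_coe (hμ : conv μ μ ⊤ = 0) (n : ℕ) :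
    FcFin c μ n = ∑' j : ℕ, if n ≤ j then conv μ μ j * pK c j n else 0 := by
  rw [FcFin, ENat.tsum_eq_tsum_coe_of_apply_top (by simp [hμ])]
  simp only [Nat.cast_le]

lemma summable_ite_conv_mul_pK (hc : 0 ≤ c) (hA0 : ∀ j : ℕ, 0 ≤ conv μ μ j)
    (hA : Summable fun j : ℕ => conv μ μ j) (n : ℕ) :
    Summable fun j : ℕ => if n ≤ j then conv μ μ j * pK c j n else 0 :=
  hA.of_nonneg_of_le
    (fun j => by
      split_ifs
      exacts [mul_nonneg (hA0 j) (pK_nonneg hc _ _), le_rfl])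
    fun j => by
      split_ifs
      · exact mul_le_of_le_one_right (hA0 j) (pK_le_one hc _ _)
      · exact hA0 j

lemma sum_range_succ_FcFin (hc : 0 < c) (hμ : conv μ μ ⊤ = 0) (hA0 : ∀ j : ℕ, 0 ≤ conv μ μ j)
    (hA : Summable fun j : ℕ => conv μ μ j) (m : ℕ) :
    ∑ n ∈ range (m + 1), FcFin c μ n = ∑' j : ℕ, conv μ μ j * kingmanCDF c j m := by
  simp_rw [FcFin_eq_tsum_coe hμ]
  rw [← Summable.tsum_finsetSum fun n _ => summable_ite_conv_mul_pK hc.le hA0 hA n]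
  refine tsum_congr fun j => ?_
  rw [← sum_range_succ_ite_pK hc j m, mul_sum]
  exact sum_congr rfl fun n _ => by split_ifs <;> simp

lemma summable_mul_kingmanCDF (hc : 0 ≤ c) {A : ℕ → ℝ} (hA0 : ∀ j, 0 ≤ A j) (hA : Summable A)
    (m : ℕ) : Summable fun j => A j * kingmanCDF c j m :=
  hA.of_nonneg_of_le (fun j => mul_nonneg (hA0 j) (kingmanCDF_nonneg hc _ _))
    fun j => mul_le_of_le_one_right (hA0 j) (kingmanCDF_le_one hc _ _)

lemma summable_FcFin (hc : 0 < c) (hμ : conv μ μ ⊤ = 0) (hA0 : ∀ j : ℕ, 0 ≤ conv μ μ j)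
    (hA : HasSum (fun j : ℕ => conv μ μ j) 1) : Summable fun n : ℕ => FcFin c μ n := by
  refine summable_of_sum_range_le (c := 1) (fun n => ?_) fun N => ?_
  · rw [FcFin_eq_tsum_coe hμ]
    exact tsum_nonneg fun j => by
      split_ifs
      exacts [mul_nonneg (hA0 j) (pK_nonneg hc.le _ _), le_rfl]
  · rcases N with _ | m
    · simp
    rw [sum_range_succ_FcFin hc hμ hA0 hA.summable, ← hA.tsum_eq]
    exact (summable_mul_kingmanCDF hc.le hA0 hA.summable m).tsum_le_tsum
      (fun j => mul_le_of_le_one_right (hA0 j) (kingmanCDF_le_one hc.le _ _)) hA.summable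

lemma tsum_ite_le_Fc (hμ : Summable fun n : ℕ => FcFin c μ n) {i : ℕ} (hi : i ≠ 0) :
    ∑' k : ℕ∞, (if (i : ℕ∞) ≤ k then Fc c μ k else 0) = 1 - ∑ n ∈ range i, FcFin c μ n := by
  have hfin : HasSum (fun n : ℕ => if (i : ℕ∞) ≤ n then Fc c μ n else 0)
      (∑' n, FcFin c μ n - ∑ n ∈ range i, FcFin c μ n) := by
    refine (hμ.hasSum.sub (hasSum_ite_lt _ i)).congr_fun fun n => ?_
    by_cases hn : i ≤ n
    · rw [if_pos (Nat.cast_le.2 hn), if_neg (not_lt.2 hn), sub_zero,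
        Fc_apply_coe μ (by omega)]
    · rw [if_neg (mt Nat.cast_le.1 hn), if_pos (not_le.1 hn), sub_self]
  have hFc : Fc c μ ⊤ = 1 - ∑' n, FcFin c μ n := if_pos rfl
  rw [(ENat.hasSum_add_apply_top (f := fun k => if (i : ℕ∞) ≤ k then Fc c μ k else 0)
    hfin).tsum_eq, if_pos le_top, hFc]
  ring

-- `kingmanCDF c j m` is `1` for `j ≤ m` and at least `1 - 2c/m` otherwise.
lemma one_sub_tsum_mul_kingmanCDF_le (hc : 0 ≤ c) {A : ℕ → ℝ} (hA0 : ∀ j, 0 ≤ A j)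
    (hA : HasSum A 1) {m : ℕ} (hm : 1 ≤ m) :
    1 - ∑' j, A j * kingmanCDF c j m ≤ 2 * c / m * (1 - ∑ j ∈ range (m + 1), A j) := by
  set β := 2 * c / m
  have hlow : ∀ j, (1 - β) * A j + β * (if j < m + 1 then A j else 0) ≤ A j * kingmanCDF c j m := by
    intro j
    split_ifs with hj
    · rw [kingmanCDF_of_le (by omega)]
      linarith
    · nlinarith [one_sub_le_kingmanCDF hc hm (j : ℕ∞), hA0 j]
  have := hasSum_le hlow ((hA.mul_left (1 - β)).add ((hasSum_ite_lt A (m + 1)).mul_left β))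
    (summable_mul_kingmanCDF hc hA0 hA.summable m).hasSum
  linarith

lemma FcFin_delta_top (n : ℕ) : FcFin c (delta ⊤) n = pK c ⊤ n := by
  rw [FcFin, conv_delta_top, tsum_eq_single ⊤ fun j hj => by simp [delta, hj]]
  simp [delta]

lemma Fc_delta_top_apply_top (hc : 0 < c) : Fc c (delta ⊤) ⊤ = 0 := by
  simp only [Fc, if_true, FcFin_delta_top, (hasSum_pK_top hc).tsum_eq, sub_self]

lemma Fc_delta_top_apply_coe (hc : 0 < c) (n : ℕ) : Fc c (delta ⊤) n = pK c ⊤ n := by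
  rcases eq_or_ne n 0 with rfl | hn
  · simp [Fc, pK_top_zero hc]
  · rw [Fc_apply_coe _ hn, FcFin_delta_top]

lemma conv_Fc_delta_top_apply_coe (hc : 0 < c) (j : ℕ) :
    conv (Fc c (delta ⊤)) (Fc c (delta ⊤)) j = ∑ p ∈ antidiagonal j, pK c ⊤ p.1 * pK c ⊤ p.2 := by
  simp only [conv_apply_coe, Fc_delta_top_apply_coe hc]

lemma conv_Fc_delta_top_nonneg (hc : 0 < c) (j : ℕ) :
    0 ≤ conv (Fc c (delta ⊤)) (Fc c (delta ⊤)) j := by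
  rw [conv_Fc_delta_top_apply_coe hc]
  exact sum_nonneg fun p _ => mul_nonneg (pK_nonneg hc.le _ _) (pK_nonneg hc.le _ _)

lemma hasSum_conv_Fc_delta_top (hc : 0 < c) :
    HasSum (fun j : ℕ => conv (Fc c (delta ⊤)) (Fc c (delta ⊤)) j) 1 := by
  have hp := hasSum_pK_top hc
  have hpp : Summable fun p : ℕ × ℕ => pK c ⊤ p.1 * pK c ⊤ p.2 :=
    hp.summable.mul_of_nonneg hp.summable (pK_nonneg hc.le ⊤ ·) (pK_nonneg hc.le ⊤ ·)
  simp only [conv_Fc_delta_top_apply_coe hc]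
  refine (summable_sum_mul_antidiagonal_of_summable_mul hpp).hasSum_iff.2 ?_
  rw [← hp.summable.tsum_mul_tsum_eq_tsum_sum_antidiagonal hp.summable hpp, hp.tsum_eq, one_mul]

-- For independent `X, X' ~ F_c(δ_∞)`: `P(X + X' ≤ m) ≥ P(X ≤ l)² ≥ 1 - 4c/l`.
lemma one_sub_sum_range_conv_Fc_delta_top_le (hc : 0 < c) {l m : ℕ} (hl : 1 ≤ l)
    (h : 2 * l ≤ m) :
    1 - ∑ j ∈ range (m + 1), conv (Fc c (delta ⊤)) (Fc c (delta ⊤)) j ≤ 2 * (2 * c / l) := by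
  have hsq := sq_sum_range_le_sum_range_sum_antidiagonal (pK_nonneg hc.le ⊤) h
  rw [sum_range_succ_pK hc le_top] at hsq
  simp only [conv_Fc_delta_top_apply_coe hc]
  nlinarith [one_sub_le_kingmanCDF hc.le hl ⊤, sq_nonneg (kingmanCDF c ⊤ l - 1)]

end

/-- If `X₂` has distribution `F_c²(δ_∞)`, then
`P(X₂ ≥ i) ≤ 16c²/((i-1)(i-2))` for all integers `i ≥ 4`. -/
theorem Fc_sq_deltaTop_tail (c : ℝ) (hc : 0 < c) (i : ℕ) (hi : 4 ≤ i) :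
    (∑' k : ℕ∞, if (i : ℕ∞) ≤ k then Fc c (Fc c (delta ⊤)) k else 0) ≤
      16 * c ^ 2 / (((i : ℝ) - 1) * ((i : ℝ) - 2)) := by
  obtain ⟨m, rfl⟩ : ∃ m, i = m + 1 := ⟨i - 1, by omega⟩
  set ν := Fc c (delta ⊤)
  have hA := hasSum_conv_Fc_delta_top hc
  have hA0 := conv_Fc_delta_top_nonneg hc
  have hνtop : conv ν ν ⊤ = 0 := conv_apply_top (Fc_delta_top_apply_top hc) (Fc_delta_top_apply_top hc)
  rw [tsum_ite_le_Fc (summable_FcFin hc hνtop hA0 hA) (by omega),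
    sum_range_succ_FcFin hc hνtop hA0 hA.summable]
  have hm : (3 : ℝ) ≤ m := by exact_mod_cast (by omega : 3 ≤ m)
  have hl : (m : ℝ) ≤ 2 * (m / 2 : ℕ) + 1 := by exact_mod_cast (by omega : m ≤ 2 * (m / 2) + 1)
  calc 1 - ∑' j : ℕ, conv ν ν j * kingmanCDF c j m
      ≤ 2 * c / m * (1 - ∑ j ∈ range (m + 1), conv ν ν j) :=
        one_sub_tsum_mul_kingmanCDF_le hc.le hA0 hA (by omega)
    _ ≤ 2 * c / m * (2 * (2 * c / (m / 2 : ℕ))) := by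
        gcongr
        exact one_sub_sum_range_conv_Fc_delta_top_le hc (by omega) (Nat.mul_div_le m 2)
    _ = 16 * c ^ 2 / (m * (2 * (m / 2 : ℕ))) := by
        field_simp
        ring
    _ ≤ 16 * c ^ 2 / (m * (m - 1)) := by
        have : (0 : ℝ) < m * (m - 1) := by nlinarith
        gcongr
        linarith
    _ = 16 * c ^ 2 / ((((m + 1 : ℕ) : ℝ) - 1) * (((m + 1 : ℕ) : ℝ) - 2)) := by
        push_cast
        ring
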